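/- arXiv:1509.04251 — 2 statements merged into one kernel-verified Lean document; each statement's English description precedes it below -/
import Mathlib

section
/- Let B be a unital Banach algebra and let a, b, d, e ∈ B be such that a is invertible along d and b is invertible along e. Let d⁻ be an inner inverse of d and e⁻ an inner inverse of e. Then b^{∥e} − a^{∥d} = b^{∥e}·e⁻·(e−d)·(1 − a·a^{∥d}) + (1 − b^{∥e}·b)·(e−d)·d⁻·a^{∥d} + b^{∥e}·(a−b)·a^{∥d}. -/
/-- `c` is the inverse of `x` along `y`: `c*x*c = c`, `cB = yB` and `Bc = By`. -/
def IsInverseAlong {B : Type*} [Ring B] (c x y : B) : Prop :=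
  c * x * c = c ∧ {z : B | ∃ r, z = c * r} = {z : B | ∃ r, z = y * r} ∧
    {z : B | ∃ r, z = r * c} = {z : B | ∃ r, z = r * y}

theorem stmt_18 {B : Type*} [NormedRing B] (a b d e : B) (x y : B)
    (hx : IsInverseAlong x a d) (hy : IsInverseAlong y b e)
    (di : B) (hdi : d * di * d = d) (ei : B) (hei : e * ei * e = e) :
    y - x = y * ei * (e - d) * (1 - a * x) + (1 - y * b) * (e - d) * di * x +
      y * (a - b) * x := by
  obtain ⟨hxax, hxR, hxL⟩ := hx
  obtain ⟨hyby, hyR, hyL⟩ := hy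
  -- d ∈ Bx
  obtain ⟨r₁, hr₁⟩ : ∃ r, d = r * x := by
    have : d ∈ {z : B | ∃ r, z = r * x} := hxL ▸ ⟨1, (one_mul d).symm⟩
    exact this
  -- x ∈ dB
  obtain ⟨r₂, hr₂⟩ : ∃ r, x = d * r := by
    have : x ∈ {z : B | ∃ r, z = d * r} := hxR ▸ ⟨1, (mul_one x).symm⟩
    exact this
  -- y ∈ Be
  obtain ⟨r₃, hr₃⟩ : ∃ r, y = r * e := by
    have : y ∈ {z : B | ∃ r, z = r * e} := hyL ▸ ⟨1, (one_mul y).symm⟩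
    exact this
  -- e ∈ yB
  obtain ⟨r₄, hr₄⟩ : ∃ r, e = y * r := by
    have : e ∈ {z : B | ∃ r, z = y * r} := hyR ▸ ⟨1, (mul_one e).symm⟩
    exact this
  have hdax : d * a * x = d := by
    calc d * a * x = r₁ * (x * a * x) := by rw [hr₁]; noncomm_ring
    _ = d := by rw [hxax, ← hr₁]
  have hddix : d * di * x = x := by
    calc d * di * x = d * di * d * r₂ := by rw [hr₂]; noncomm_ring
    _ = x := by rw [hdi, ← hr₂]
  have hyeie : y * ei * e = y := by
    calc y * ei * e = r₃ * (e * ei * e) := by rw [hr₃]; noncomm_ring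
    _ = y := by rw [hei, ← hr₃]
  have hybe : y * b * e = e := by
    calc y * b * e = (y * b * y) * r₄ := by rw [hr₄]; noncomm_ring
    _ = e := by rw [hyby, ← hr₄]
  have h1 : y * ei * (e - d) * (1 - a * x) = y - y * a * x := by
    have : y * ei * (e - d) * (1 - a * x)
        = (y * ei * e) * (1 - a * x) + (y * ei) * (d * a * x - d) := by
      noncomm_ring
    rw [this, hyeie, hdax]
    noncomm_ring
  have h2 : (1 - y * b) * (e - d) * di * x = y * b * x - x := by
    have : (1 - y * b) * (e - d) * di * x
        = (e - y * b * e) * (di * x) - (d * di * x) + y * b * (d * di * x) := by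
      noncomm_ring
    rw [this, hybe, hddix]
    noncomm_ring
  rw [h1, h2]
  noncomm_ring
end

section
/- Let B be a unital Banach algebra and let (aₙ) and (dₙ) be sequences in B converging to a and d respectively. Suppose a is invertible along d, each aₙ is invertible along dₙ, and for each n let dₙ⁻ be an inner inverse of dₙ. If the sequence (aₙ^{∥dₙ}) is bounded and sup_n ‖dₙ⁻‖ < ∞, then aₙ^{∥dₙ} converges to a^{∥d}. -/
open Filter

theorem stmt_19 {B : Type*} [NormedRing B] (a d : B) (b : B)
    (aseq dseq bseq dinv : ℕ → B)
    (ha : Tendsto aseq atTop (nhds a)) (hd : Tendsto dseq atTop (nhds d))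
    (hb : IsInverseAlong b a d)
    (hbn : ∀ n, IsInverseAlong (bseq n) (aseq n) (dseq n))
    (hdinv : ∀ n, dseq n * dinv n * dseq n = dseq n)
    (hbdd : ∃ C : ℝ, ∀ n, ‖bseq n‖ ≤ C)
    (hdbdd : ∃ C : ℝ, ∀ n, ‖dinv n‖ ≤ C) :
    Tendsto bseq atTop (nhds b) := by
  obtain ⟨hb1, hb2, hb3⟩ := hb
  -- b = v * d
  obtain ⟨v, hv⟩ : ∃ v, b = v * d := by
    have : b ∈ {z : B | ∃ r, z = r * b} := ⟨b * a, hb1.symm⟩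
    rw [hb3] at this
    exact this
  -- b * (a * d) = d
  obtain ⟨s, hs⟩ : ∃ s, d = b * s := by
    have : d ∈ {z : B | ∃ r, z = d * r} := ⟨1, (mul_one d).symm⟩
    rw [← hb2] at this
    exact this
  have h3 : b * (a * d) = d := by
    rw [hs, ← mul_assoc, ← mul_assoc, hb1]
  -- per-n identities
  have h1 : ∀ n, dseq n * dinv n * bseq n = bseq n := by
    intro n
    obtain ⟨u, hu⟩ : ∃ u, bseq n = dseq n * u := by
      have : bseq n ∈ {z : B | ∃ r, z = bseq n * r} :=
        ⟨aseq n * bseq n, by rw [← mul_assoc, (hbn n).1]⟩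
      rw [(hbn n).2.1] at this
      exact this
    rw [hu, ← mul_assoc, mul_assoc (dseq n * dinv n), ← mul_assoc, hdinv n]
  have h2 : ∀ n, dseq n * (aseq n * bseq n) = dseq n := by
    intro n
    obtain ⟨w, hw⟩ : ∃ w, dseq n = w * bseq n := by
      have : dseq n ∈ {z : B | ∃ r, z = r * dseq n} := ⟨1, (one_mul _).symm⟩
      rw [← (hbn n).2.2] at this
      exact this
    rw [hw, mul_assoc, ← mul_assoc (bseq n), (hbn n).1]
  -- key algebraic identity
  have key : ∀ n, bseq n - b =
      ((dseq n - d) + b * (a * d - aseq n * dseq n)) * (dinv n * bseq n)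
        - v * (d - dseq n) * (1 - aseq n * bseq n) := by
    intro n
    have X : ((dseq n - d) + b * (a * d - aseq n * dseq n)) * (dinv n * bseq n)
        = bseq n - b * (aseq n * bseq n) := by
      calc ((dseq n - d) + b * (a * d - aseq n * dseq n)) * (dinv n * bseq n)
          = ((dseq n - d) + (b * (a * d) - b * (aseq n * dseq n))) * (dinv n * bseq n) := by
            noncomm_ring
        _ = (dseq n - b * (aseq n * dseq n)) * (dinv n * bseq n) := by
            rw [h3]; noncomm_ring
        _ = dseq n * dinv n * bseq n
              - b * (aseq n * (dseq n * dinv n * bseq n)) := by noncomm_ring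
        _ = bseq n - b * (aseq n * bseq n) := by rw [h1 n]
    have Y : v * (d - dseq n) * (1 - aseq n * bseq n)
        = b - b * (aseq n * bseq n) := by
      calc v * (d - dseq n) * (1 - aseq n * bseq n)
          = (v * d) * (1 - aseq n * bseq n)
              - v * (dseq n - dseq n * (aseq n * bseq n)) := by noncomm_ring
        _ = b * (1 - aseq n * bseq n) - v * (dseq n - dseq n) := by rw [← hv, h2 n]
        _ = b - b * (aseq n * bseq n) := by noncomm_ring
    rw [X, Y]
    abel
  -- boundedness facts
  obtain ⟨C, hC⟩ := hbdd
  obtain ⟨C', hC'⟩ := hdbdd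
  have hbnn : ∀ n, (0:ℝ) ≤ ‖bseq n‖ := fun n => norm_nonneg _
  have hCnn : (0:ℝ) ≤ C := le_trans (norm_nonneg _) (hC 0)
  -- boundedness of dinv n * bseq n
  have hbd1 : IsBoundedUnder (· ≤ ·) atTop ((‖·‖) ∘ fun n => dinv n * bseq n) := by
    refine ⟨C' * C, eventually_map.2 (Eventually.of_forall fun n => ?_)⟩
    calc ‖dinv n * bseq n‖ ≤ ‖dinv n‖ * ‖bseq n‖ := norm_mul_le _ _
      _ ≤ C' * C := mul_le_mul (hC' n) (hC n) (norm_nonneg _)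
          (le_trans (norm_nonneg _) (hC' 0))
  -- boundedness of 1 - aseq n * bseq n
  obtain ⟨Ca, hCa⟩ := ha.norm.isBoundedUnder_le
  have hbd2 : IsBoundedUnder (· ≤ ·) atTop ((‖·‖) ∘ fun n => 1 - aseq n * bseq n) := by
    refine ⟨‖(1:B)‖ + Ca * C, ?_⟩
    rw [eventually_map] at hCa ⊢
    filter_upwards [hCa] with n hn
    calc ‖(1:B) - aseq n * bseq n‖ ≤ ‖(1:B)‖ + ‖aseq n * bseq n‖ := norm_sub_le _ _
      _ ≤ ‖(1:B)‖ + Ca * C := by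
          gcongr
          calc ‖aseq n * bseq n‖ ≤ ‖aseq n‖ * ‖bseq n‖ := norm_mul_le _ _
            _ ≤ Ca * C := mul_le_mul hn (hC n) (norm_nonneg _)
                (le_trans (norm_nonneg _) hn)
  -- tendsto of the small factors
  have hX0 : Tendsto (fun n => (dseq n - d) + b * (a * d - aseq n * dseq n))
      atTop (nhds 0) := by
    have t1 : Tendsto (fun n => dseq n - d) atTop (nhds 0) := by
      simpa using hd.sub (tendsto_const_nhds (x := d))
    have t2 : Tendsto (fun n => b * (a * d - aseq n * dseq n)) atTop (nhds 0) := by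
      have : Tendsto (fun n => a * d - aseq n * dseq n) atTop (nhds 0) := by
        simpa using (tendsto_const_nhds (x := a * d)).sub (ha.mul hd)
      simpa using (tendsto_const_nhds (x := b)).mul this
    simpa using t1.add t2
  have hY0 : Tendsto (fun n => v * (d - dseq n)) atTop (nhds 0) := by
    have : Tendsto (fun n => d - dseq n) atTop (nhds 0) := by
      simpa using (tendsto_const_nhds (x := d)).sub hd
    simpa using (tendsto_const_nhds (x := v)).mul this
  -- conclude
  have hX : Tendsto (fun n => ((dseq n - d) + b * (a * d - aseq n * dseq n))
      * (dinv n * bseq n)) atTop (nhds 0) :=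
    hX0.zero_mul_isBoundedUnder_le hbd1
  have hY : Tendsto (fun n => v * (d - dseq n) * (1 - aseq n * bseq n))
      atTop (nhds 0) :=
    hY0.zero_mul_isBoundedUnder_le hbd2
  have hdiff : Tendsto (fun n => bseq n - b) atTop (nhds 0) := by
    have := hX.sub hY
    simp only [sub_zero] at this
    exact Tendsto.congr (fun n => (key n).symm) this
  have := hdiff.add (tendsto_const_nhds (x := b))
  simpa using this
end
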